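/- Characterisation of grounding trees by their immediate grounding claims: a grounding tree t corresponds to some grounding derivation if and only if every element of the list of immediate grounding claims of t is an instance of a grounding rule, i.e., writing each such element as mk (Γ.map Sum.inl) (Δ.map Sum.inl) B, the relation R Γ Δ B holds. -/

import Mathlib

inductive DTree (α : Type*) : Type _ where
  | leaf (a : α)
  | node (a : α) (gchildren cchildren : List (DTree α))

namespace DTree
variable {α : Type*}

def label : DTree α → α
  | .leaf a => a
  | .node a _ _ => a

def isLeaf : DTree α → Prop
  | .leaf _ => True
  | .node _ _ _ => False

end DTree

inductive DValid {α : Type*} (R : List α → List α → α → Prop) : DTree α → Prop where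
  | leaf (a : α) : DValid R (.leaf a)
  | node (a : α) (gs cs : List (DTree α)) :
      R (gs.map DTree.label) (cs.map DTree.label) a →
      (∀ t ∈ gs, DValid R t) → (∀ t ∈ cs, DValid R t) →
      DValid R (.node a gs cs)

/-- A grounding derivation for the immediate grounding relation `R`. -/
structure GDeriv {α : Type*} (R : List α → List α → α → Prop) where
  tree : DTree α
  valid : DValid R tree
  nonleaf : ¬ tree.isLeaf

inductive GTree (α : Type*) : Type _ where
  | mk (grounds : List (α ⊕ GTree α)) (conds : List (α ⊕ GTree α)) (concl : α)

namespace GTree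
variable {α : Type*}

def concl : GTree α → α
  | .mk _ _ b => b

end GTree

universe u

mutual
/-- Correspondence between grounding trees and grounding derivations. -/
inductive Corr {α : Type u} : GTree α → DTree α → Prop where
  | mk {G C : List (α ⊕ GTree α)} {B : α} {gs cs : List (DTree α)} :
      CorrList G gs → CorrList C cs → Corr (.mk G C B) (.node B gs cs)

/-- Entry-by-entry correspondence between a list of grounding-tree entries and a list
of child subderivations: a plain entry `Sum.inl a` matches a leaf labelled `a`, and a
subtree entry `Sum.inr s` matches a non-leaf child whose subderivation corresponds to `s`. -/
inductive CorrList {α : Type u} : List (α ⊕ GTree α) → List (DTree α) → Prop where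
  | nil : CorrList [] []
  | consFm {a : α} {G : List (α ⊕ GTree α)} {gs : List (DTree α)} :
      CorrList G gs → CorrList (Sum.inl a :: G) (DTree.leaf a :: gs)
  | consTr {s : GTree α} {t : DTree α} {G : List (α ⊕ GTree α)} {gs : List (DTree α)} :
      Corr s t → ¬ t.isLeaf → CorrList G gs → CorrList (Sum.inr s :: G) (t :: gs)
end

namespace GTree
variable {α : Type*}

/-- The conclusion of an entry of a grounding tree. -/
def econcl : α ⊕ GTree α → α
  | .inl a => a
  | .inr s => s.concl

/-- The flattening of a grounding tree: the immediate grounding claim it expresses. -/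
def flatten : GTree α → GTree α
  | .mk G C B => .mk (G.map (Sum.inl ∘ econcl)) (C.map (Sum.inl ∘ econcl)) B

mutual
/-- The list of immediate grounding claims of a grounding tree: its flattening followed
by the immediate grounding claims of all its subtree entries. -/
def claims : GTree α → List (GTree α)
  | .mk G C B => flatten (.mk G C B) :: (claimsList G ++ claimsList C)

def claimsList : List (α ⊕ GTree α) → List (GTree α)
  | [] => []
  | .inl _ :: es => claimsList es
  | .inr s :: es => claims s ++ claimsList es
end

end GTree

section Aux
variable {α : Type u}

mutual
def toD : GTree α → DTree α
  | .mk G C B => .node B (toDList G) (toDList C)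
def toDList : List (α ⊕ GTree α) → List (DTree α)
  | [] => []
  | .inl a :: es => .leaf a :: toDList es
  | .inr s :: es => toD s :: toDList es
end

theorem toD_label : ∀ t : GTree α, (toD t).label = t.concl
  | .mk _ _ _ => rfl

theorem toDList_labels : ∀ G : List (α ⊕ GTree α),
    (toDList G).map DTree.label = G.map GTree.econcl
  | [] => rfl
  | .inl a :: es => by simp [toDList, GTree.econcl, toDList_labels es, DTree.label]
  | .inr s :: es => by
      simp [toDList, GTree.econcl, toDList_labels es, toD_label s]

theorem toD_nonleaf : ∀ t : GTree α, ¬ (toD t).isLeaf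
  | .mk _ _ _ => fun h => h

mutual
theorem corr_toD : ∀ t : GTree α, Corr t (toD t)
  | .mk G C B => Corr.mk (corrList_toD G) (corrList_toD C)
theorem corrList_toD : ∀ G : List (α ⊕ GTree α), CorrList G (toDList G)
  | [] => CorrList.nil
  | .inl a :: es => CorrList.consFm (corrList_toD es)
  | .inr s :: es =>
      CorrList.consTr (corr_toD s) (toD_nonleaf s) (corrList_toD es)
end

mutual
theorem corr_label : ∀ {t : GTree α} {d : DTree α}, Corr t d → d.label = t.concl
  | _, _, .mk _ _ => rfl
theorem corrList_labels : ∀ {G : List (α ⊕ GTree α)} {gs : List (DTree α)},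
    CorrList G gs → gs.map DTree.label = G.map GTree.econcl
  | _, _, .nil => rfl
  | _, _, .consFm h => by
      simp [GTree.econcl, corrList_labels h, DTree.label]
  | _, _, .consTr hc _ h => by
      simp [GTree.econcl, corrList_labels h, corr_label hc]
end

variable {R : List α → List α → α → Prop}

def Inst (R : List α → List α → α → Prop) (u : GTree α) : Prop :=
  ∃ (Γ Δ : List α) (B : α),
    u = GTree.mk (Γ.map Sum.inl) (Δ.map Sum.inl) B ∧ R Γ Δ B

mutual
theorem fwd : ∀ {t : GTree α} {d : DTree α}, Corr t d → DValid R d →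
    ∀ u ∈ t.claims, Inst R u
  | .mk G C B, _, .mk (gs := gs) (cs := cs) hG hC, hV, u, hu => by
      rcases hV with _ | ⟨_, _, _, hR, hg, hc⟩
      simp only [GTree.claims, List.mem_cons, List.mem_append] at hu
      rcases hu with rfl | hu | hu
      · exact ⟨G.map GTree.econcl, C.map GTree.econcl, B, by
          simp [GTree.flatten, List.map_map], by
          rwa [← corrList_labels hG, ← corrList_labels hC]⟩
      · exact fwdList hG hg u hu
      · exact fwdList hC hc u hu
theorem fwdList : ∀ {G : List (α ⊕ GTree α)} {gs : List (DTree α)},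
    CorrList G gs → (∀ d ∈ gs, DValid R d) → ∀ u ∈ GTree.claimsList G, Inst R u
  | _, _, .nil, _, u, hu => by simp [GTree.claimsList] at hu
  | _, _, .consFm h, hv, u, hu =>
      fwdList h (fun d hd => hv d (List.mem_cons_of_mem _ hd)) u hu
  | _, _, .consTr (s := s) (t := d) hc _ h, hv, u, hu => by
      simp only [GTree.claimsList, List.mem_append] at hu
      rcases hu with hu | hu
      · exact fwd hc (hv d List.mem_cons_self) u hu
      · exact fwdList h (fun d hd => hv d (List.mem_cons_of_mem _ hd)) u hu
end

mutual
theorem bwd : ∀ t : GTree α, (∀ u ∈ t.claims, Inst R u) → DValid R (toD t)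
  | .mk G C B, h => by
      have hflat : Inst R (GTree.flatten (.mk G C B)) := by
        apply h; simp [GTree.claims]
      obtain ⟨Γ, Δ, B', he, hR⟩ := hflat
      simp only [GTree.flatten, GTree.mk.injEq, ← List.map_map] at he
      obtain ⟨h1, h2, rfl⟩ := he
      have hΓ : Γ = G.map GTree.econcl :=
        (List.map_injective_iff.2 Sum.inl_injective h1).symm
      have hΔ : Δ = C.map GTree.econcl :=
        (List.map_injective_iff.2 Sum.inl_injective h2).symm
      subst hΓ; subst hΔ
      refine DValid.node _ _ _ ?_ ?_ ?_
      · rwa [toDList_labels, toDList_labels]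
      · exact bwdList G fun u hu => h u (by
          simp [GTree.claims]; tauto)
      · exact bwdList C fun u hu => h u (by
          simp [GTree.claims]; tauto)
theorem bwdList : ∀ G : List (α ⊕ GTree α),
    (∀ u ∈ GTree.claimsList G, Inst R u) → ∀ d ∈ toDList G, DValid R d
  | [], _, d, hd => by simp [toDList] at hd
  | .inl a :: es, h, d, hd => by
      rcases List.mem_cons.1 hd with rfl | hd
      · exact DValid.leaf a
      · exact bwdList es (fun u hu => h u (by simpa [GTree.claimsList] using hu)) d hd
  | .inr s :: es, h, d, hd => by
      rcases List.mem_cons.1 hd with rfl | hd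
      · exact bwd s fun u hu => h u (by simp [GTree.claimsList]; tauto)
      · exact bwdList es (fun u hu => h u (by simp [GTree.claimsList]; tauto)) d hd
end

end Aux

theorem corresponds_iff_claims_rule_instances {α : Type*}
    (R : List α → List α → α → Prop) (t : GTree α) :
    (∃ d : GDeriv R, Corr t d.tree) ↔
      ∀ u ∈ t.claims, ∃ (Γ Δ : List α) (B : α),
        u = GTree.mk (Γ.map Sum.inl) (Δ.map Sum.inl) B ∧ R Γ Δ B := by
  constructor
  · rintro ⟨d, hc⟩
    exact fwd hc d.valid
  · intro h
    exact ⟨⟨toD t, bwd t h, toD_nonleaf t⟩, corr_toD t⟩
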